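/- The generating function G(x,a,b) counting plane trees by edges (x), leaves (a), and internal nodes (b) has the closed form G(x,a,b) = [1 + (2-a-b)x - sqrt((1+(2-a-b)x)^2 - 4x(1-(b-1)x))] / (2x), and G*(x,a,b) = [1 + (a-b)x - sqrt((1+(2-a-b)x)^2 - 4x(1-(b-1)x))] / (2(1-(b-1)x)). -/

import Mathlib

/-!
Detaching the first subtree of the root splits a tree with `n + 1` edges into a branch and the
remaining tree, with `n` edges in total. Let `H` count branches, i.e. trees whose root is weighted
as the non-root vertex it becomes once attached to a parent. Then `G = 1 + xHG`, `G* = xH`, and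
detaching the first subtree of a branch gives `H = a + xH(G - 1 + b)`, as the root of the branch
has down-degree one exactly when the rest is a single vertex. Eliminating `H` yields
`xG² - (1 + (2-a-b)x)G + 1 - (b-1)x = 0`, so `S = 1 + (2-a-b)x - 2xG` squares to the
discriminant and has constant coefficient `1`.
-/

inductive PlaneTree : Type
  | node : List PlaneTree → PlaneTree

namespace PlaneTree

def edges : PlaneTree → ℕ
  | node ts => (ts.attach.map (fun t => edges t.1)).sum + ts.length
decreasing_by have := List.sizeOf_lt_of_mem t.2; simp [PlaneTree.node.sizeOf_spec]; omega

def leafAux : PlaneTree → ℕ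
  | node ts => (if ts.length = 0 then 1 else 0) + (ts.attach.map (fun t => leafAux t.1)).sum
decreasing_by have := List.sizeOf_lt_of_mem t.2; simp [PlaneTree.node.sizeOf_spec]; omega

def internalAux : PlaneTree → ℕ
  | node ts => (if ts.length = 1 then 1 else 0) + (ts.attach.map (fun t => internalAux t.1)).sum
decreasing_by have := List.sizeOf_lt_of_mem t.2; simp [PlaneTree.node.sizeOf_spec]; omega

/-- number of leaves: non-root vertices of down degree 0 -/
def leaves : PlaneTree → ℕ
  | node ts => (ts.map leafAux).sum

/-- number of internal nodes: non-root vertices of down degree 1 -/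
def internals : PlaneTree → ℕ
  | node ts => (ts.map internalAux).sum

def rootDegree : PlaneTree → ℕ
  | node ts => ts.length

end PlaneTree

/-- The `n`-th coefficient of the trivariate generating function `G(x,a,b)`
counting plane trees by edges, leaves (`a = X 0`) and internal nodes (`b = X 1`). -/
noncomputable def Gcoef (n : ℕ) : MvPolynomial (Fin 2) ℚ :=
  ∑ᶠ T : {T : PlaneTree // T.edges = n},
    (MvPolynomial.X 0 : MvPolynomial (Fin 2) ℚ) ^ T.1.leaves *
      MvPolynomial.X 1 ^ T.1.internals

/-- The same, restricted to plane trees with root degree 1. -/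
noncomputable def GstarCoef (n : ℕ) : MvPolynomial (Fin 2) ℚ :=
  ∑ᶠ T : {T : PlaneTree // T.edges = n ∧ T.rootDegree = 1},
    (MvPolynomial.X 0 : MvPolynomial (Fin 2) ℚ) ^ T.1.leaves *
      MvPolynomial.X 1 ^ T.1.internals

open Finset PowerSeries

section GenSeries

variable {α β R : Type*} [CommSemiring R]

noncomputable def genSeries (size : α → ℕ) (w : α → R) : R⟦X⟧ :=
  PowerSeries.mk fun n => ∑ᶠ a : {a // size a = n}, w a

@[simp]
lemma coeff_genSeries (size : α → ℕ) (w : α → R) (n : ℕ) :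
    coeff n (genSeries size w) = ∑ᶠ a : {a // size a = n}, w a :=
  coeff_mk _ _

@[simp]
lemma genSeries_zero (size : α → ℕ) : genSeries size (0 : α → R) = 0 := by
  ext n; simp

def prodSizeEquiv (size : α → ℕ) (size' : β → ℕ) (n : ℕ) :
    {q : α × β // size q.1 + size' q.2 = n} ≃
      Σ p : antidiagonal n, {a // size a = p.1.1} × {b // size' b = p.1.2} where
  toFun q :=
    ⟨⟨(size q.1.1, size' q.1.2), mem_antidiagonal.2 q.2⟩, ⟨q.1.1, rfl⟩, ⟨q.1.2, rfl⟩⟩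
  invFun x := ⟨(x.2.1, x.2.2), by rw [x.2.1.2, x.2.2.2]; exact mem_antidiagonal.1 x.1.2⟩
  left_inv _ := rfl
  right_inv := by
    rintro ⟨⟨⟨i, j⟩, hp⟩, ⟨a, ha⟩, ⟨b, hb⟩⟩
    obtain rfl : size a = i := ha
    obtain rfl : size' b = j := hb
    rfl

lemma genSeries_mul (size : α → ℕ) (size' : β → ℕ) [∀ n, Finite {a // size a = n}]
    [∀ n, Finite {b // size' b = n}] (u : α → R) (v : β → R) :
    genSeries size u * genSeries size' v =
      genSeries (fun q : α × β => size q.1 + size' q.2) (fun q => u q.1 * v q.2) := by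
  classical
  have (n : ℕ) : Fintype {a // size a = n} := .ofFinite _
  have (n : ℕ) : Fintype {b // size' b = n} := .ofFinite _
  ext n
  rw [coeff_mul, coeff_genSeries, ← finsum_comp_equiv (prodSizeEquiv size size' n).symm,
    finsum_eq_sum_of_fintype, Fintype.sum_sigma, ← Finset.sum_coe_sort]
  refine Finset.sum_congr rfl fun p _ => ?_
  simp only [coeff_genSeries, finsum_eq_sum_of_fintype, Fintype.sum_mul_sum,
    Fintype.sum_prod_type]
  rfl

end GenSeries

namespace PlaneTree

@[simp]
lemma edges_node (ts : List PlaneTree) : edges (node ts) = (ts.map edges).sum + ts.length := by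
  rw [edges, List.attach_map_val]

@[simp]
lemma leafAux_node (ts : List PlaneTree) :
    leafAux (node ts) = (if ts.length = 0 then 1 else 0) + (ts.map leafAux).sum := by
  rw [leafAux, List.attach_map_val]

@[simp]
lemma internalAux_node (ts : List PlaneTree) :
    internalAux (node ts) = (if ts.length = 1 then 1 else 0) + (ts.map internalAux).sum := by
  rw [internalAux, List.attach_map_val]

def cons (s : PlaneTree) : PlaneTree → PlaneTree
  | node ts => node (s :: ts)

@[simp]
lemma edges_cons (s T : PlaneTree) : (cons s T).edges = s.edges + T.edges + 1 := by
  cases T; simp only [cons, edges_node, List.map_cons, List.sum_cons, List.length_cons]; ring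

@[simp]
lemma rootDegree_cons (s T : PlaneTree) : (cons s T).rootDegree = T.rootDegree + 1 := by
  cases T; rfl

lemma eq_nil_of_edges_eq_zero {T : PlaneTree} (h : T.edges = 0) : T = node [] := by
  cases T with
  | node ts =>
    simp only [edges_node, Nat.add_eq_zero_iff, List.length_eq_zero_iff] at h
    rw [h.2]

instance : Unique {T : PlaneTree // T.edges = 0} where
  default := ⟨node [], by simp⟩
  uniq T := Subtype.ext (eq_nil_of_edges_eq_zero T.2)

def consEquiv (n : ℕ) :
    {q : PlaneTree × PlaneTree // q.1.edges + q.2.edges = n} ≃ {T : PlaneTree // T.edges = n + 1}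
    where
  toFun q := ⟨cons q.1.1 q.1.2, by rw [edges_cons, q.2]⟩
  invFun
    | ⟨node [], h⟩ => absurd h (by simp)
    | ⟨node (s :: ts), h⟩ => ⟨(s, node ts), by simp at h ⊢; omega⟩
  left_inv := by rintro ⟨⟨s, ⟨ts⟩⟩, h⟩; rfl
  right_inv := by
    rintro ⟨⟨_ | ⟨s, ts⟩⟩, h⟩
    · exact absurd h (by simp)
    · rfl

instance finite_edges_eq (n : ℕ) : Finite {T : PlaneTree // T.edges = n} := by
  induction n using Nat.strong_induction_on with
  | _ n ih =>
    cases n with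
    | zero => infer_instance
    | succ n =>
      have (p : antidiagonal n) : Finite {T : PlaneTree // T.edges = p.1.1} :=
        ih _ (Nat.antidiagonal.fst_lt p.2)
      have (p : antidiagonal n) : Finite {T : PlaneTree // T.edges = p.1.2} :=
        ih _ (Nat.antidiagonal.snd_lt p.2)
      exact .of_equiv _ ((prodSizeEquiv edges edges n).symm.trans (consEquiv n))

lemma genSeries_edges_of_cons {R : Type*} [CommSemiring R] {w u v : PlaneTree → R}
    (h : ∀ s T, w (cons s T) = u s * v T) :
    genSeries edges w = C (w (node [])) + X * (genSeries edges u * genSeries edges v) := by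
  rw [genSeries_mul]
  ext (_ | n)
  · simp [finsum_unique]
    rfl
  · simp [coeff_succ_X_mul, ← finsum_comp_equiv (consEquiv n), consEquiv, h]

section Weights

variable {R : Type*} [CommSemiring R] (a b : R)

def weight (T : PlaneTree) : R := a ^ T.leaves * b ^ T.internals

def branchWeight (T : PlaneTree) : R := a ^ T.leafAux * b ^ T.internalAux

def starWeight (T : PlaneTree) : R := if T.rootDegree = 1 then weight a b T else 0

lemma weight_nil : weight a b (node []) = 1 := by simp [weight, leaves, internals]

lemma weight_cons (s T : PlaneTree) :
    weight a b (cons s T) = branchWeight a b s * weight a b T := by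
  cases T
  simp only [weight, branchWeight, cons, leaves, internals, List.map_cons, List.sum_cons, pow_add]
  ring

lemma branchWeight_cons (s T : PlaneTree) :
    branchWeight a b (cons s T) =
      branchWeight a b s * if T.rootDegree = 0 then b else weight a b T := by
  obtain ⟨_ | ⟨t, ts⟩⟩ := T
  · simp [branchWeight, cons, rootDegree, pow_add]
    ring
  · simp only [branchWeight, weight, cons, rootDegree, leafAux_node, internalAux_node, leaves,
      internals, List.length_cons, List.map_cons, List.sum_cons]
    simp [pow_add]
    ring

lemma starWeight_cons (s T : PlaneTree) :
    starWeight a b (cons s T) = branchWeight a b s * if T.rootDegree = 0 then 1 else 0 := by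
  obtain ⟨_ | ⟨t, ts⟩⟩ := T
  · rw [starWeight, rootDegree_cons, weight_cons, weight_nil]
    simp [rootDegree]
  · simp [starWeight, cons, rootDegree]

lemma coeff_genSeries_starWeight (n : ℕ) :
    coeff n (genSeries edges (starWeight a b)) =
      ∑ᶠ T : {T : PlaneTree // T.edges = n ∧ T.rootDegree = 1}, weight a b T := by
  rw [coeff_genSeries, finsum_subtype_eq_finsum_cond,
    finsum_subtype_eq_finsum_cond (fun T : PlaneTree => T.edges = n ∧ T.rootDegree = 1)]
  refine finsum_congr fun T => ?_
  by_cases h : T.rootDegree = 1 <;> simp [starWeight, h, finsum_eq_if]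

end Weights

section Series

variable {R : Type*} [CommRing R] (a b : R)

lemma genSeries_weight :
    genSeries edges (weight a b) =
      1 + X * (genSeries edges (branchWeight a b) * genSeries edges (weight a b)) :=
  (genSeries_edges_of_cons (weight_cons a b)).trans (by rw [weight_nil, map_one])

lemma genSeries_branchWeight :
    genSeries edges (branchWeight a b) =
      C a + X * (genSeries edges (branchWeight a b) *
        (genSeries edges (weight a b) - 1 + C b)) := by
  have hextraChild : genSeries edges (fun T => if T.rootDegree = 0 then b else weight a b T) =
      genSeries edges (weight a b) - 1 + C b := by
    rw [genSeries_edges_of_cons (u := branchWeight a b) (v := weight a b) (by simp [weight_cons])]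
    simp only [rootDegree, List.length_nil, ↓reduceIte]
    linear_combination -genSeries_weight a b
  exact (genSeries_edges_of_cons (branchWeight_cons a b)).trans
    (by simp [hextraChild, branchWeight])

lemma genSeries_starWeight :
    genSeries edges (starWeight a b) = X * genSeries edges (branchWeight a b) := by
  have hroot : genSeries edges (fun T => if T.rootDegree = 0 then (1 : R) else 0) = 1 := by
    rw [genSeries_edges_of_cons (u := 0) (v := fun T => if T.rootDegree = 0 then (1 : R) else 0)
      (by simp)]
    simp [rootDegree]
  rw [genSeries_edges_of_cons (starWeight_cons a b), hroot]
  simp [starWeight, rootDegree]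

end Series

end PlaneTree

section QuadraticEquation

variable {A : Type*} [CommRing A] {x a b G H Gstar : A}

lemma sq_eq_discriminant_of_tree_equations (hG : G = 1 + x * (H * G))
    (hH : H = a + x * (H * (G - 1 + b))) :
    (1 + (2 - a - b) * x - 2 * x * G) ^ 2 =
      (1 + (2 - a - b) * x) ^ 2 - 4 * x * (1 - (b - 1) * x) := by
  linear_combination (-4 * x * (1 - x * (G - 1 + b))) * hG + (-4 * x * (x * G)) * hH

lemma star_eq_of_tree_equations (hG : G = 1 + x * (H * G))
    (hH : H = a + x * (H * (G - 1 + b))) (hstar : Gstar = x * H) :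
    2 * (1 - (b - 1) * x) * Gstar = 1 + (a - b) * x - (1 + (2 - a - b) * x - 2 * x * G) := by
  linear_combination (2 * (1 + (1 - b) * x)) * hstar + (2 * x) * hH - (2 * x) * hG

end QuadraticEquation

lemma mk_Gcoef :
    PowerSeries.mk Gcoef = genSeries PlaneTree.edges
      (PlaneTree.weight (MvPolynomial.X 0 : MvPolynomial (Fin 2) ℚ) (MvPolynomial.X 1)) :=
  rfl

lemma mk_GstarCoef :
    PowerSeries.mk GstarCoef = genSeries PlaneTree.edges
      (PlaneTree.starWeight (MvPolynomial.X 0 : MvPolynomial (Fin 2) ℚ) (MvPolynomial.X 1)) :=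
  PowerSeries.ext fun n => (coeff_mk _ _).trans (PlaneTree.coeff_genSeries_starWeight _ _ n).symm

/-- Closed forms
`G = (1 + (2-a-b)x - √Ψ)/(2x)` and `G* = (1 + (a-b)x - √Ψ)/(2(1-(b-1)x))`,
where `Ψ = (1+(2-a-b)x)² - 4x(1-(b-1)x)` and `√Ψ` is the formal power series
square root of `Ψ` with constant term `1`; stated denominator-free. -/
theorem G_closed_form :
    letI R := MvPolynomial (Fin 2) ℚ
    letI G : PowerSeries R := PowerSeries.mk Gcoef
    letI Gstar : PowerSeries R := PowerSeries.mk GstarCoef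
    letI a : PowerSeries R := PowerSeries.C (MvPolynomial.X 0)
    letI b : PowerSeries R := PowerSeries.C (MvPolynomial.X 1)
    letI x : PowerSeries R := PowerSeries.X
    ∃ S : PowerSeries R,
      S ^ 2 = (1 + (2 - a - b) * x) ^ 2 - 4 * x * (1 - (b - 1) * x) ∧
      PowerSeries.constantCoeff S = 1 ∧
      2 * x * G = 1 + (2 - a - b) * x - S ∧
      2 * (1 - (b - 1) * x) * Gstar = 1 + (a - b) * x - S := by
  have hG := PlaneTree.genSeries_weight (MvPolynomial.X 0 : MvPolynomial (Fin 2) ℚ) (.X 1)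
  have hH := PlaneTree.genSeries_branchWeight (MvPolynomial.X 0 : MvPolynomial (Fin 2) ℚ) (.X 1)
  have hstar := PlaneTree.genSeries_starWeight (MvPolynomial.X 0 : MvPolynomial (Fin 2) ℚ) (.X 1)
  simp only [mk_Gcoef, mk_GstarCoef]
  exact ⟨_, sq_eq_discriminant_of_tree_equations hG hH, by simp, by ring,
    star_eq_of_tree_equations hG hH hstar⟩
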